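/- arXiv:2605.05286 — 3 statements merged into one kernel-verified Lean document; each statement's English description precedes it below -/
import Mathlib

section
/- Let P be an extended fuzzy logic program. The approximator A_P is ≤p-monotone: for all L, U, M, T ∈ 𝕀, if (L,U) ≤p (M,T) then A_P(L,U) ≤p A_P(M,T). -/
/-- Literals over a type `A` of atoms: atoms `p` and strongly negated atoms `¬p`. -/
inductive Lit (A : Type*) where
  | pos : A → Lit A
  | neg : A → Lit A

/-- A signature of fuzzy connectives: a family `F` of connective names together with
arities and associated truth functions on the lattice `V` of truth values. -/
structure Sig (V : Type*) where
  F : Type*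
  ar : F → ℕ
  tf : (f : F) → (Fin (ar f) → V) → V

/-- Every connective truth function of the signature is monotone in each argument. -/
def Sig.IsMonotone {V : Type*} [Preorder V] (S : Sig V) : Prop :=
  ∀ (f : S.F) (x y : Fin (S.ar f) → V), (∀ i, x i ≤ y i) → S.tf f x ≤ S.tf f y

/-- Extended fuzzy formulas: constants, literals, weakly negated literals,
and connectives applied to formulas. -/
inductive Fm (V : Type*) (S : Sig V) (A : Type*) where
  | const : V → Fm V S A
  | lit : Lit A → Fm V S A
  | wneg : Lit A → Fm V S A
  | app : (f : S.F) → (Fin (S.ar f) → Fm V S A) → Fm V S A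

/-- Paraconsistent fuzzy interpretations: each atom gets a pair (truth degree, falsity degree).
The order is the pointwise truth order `≤t`. -/
abbrev Interp (V : Type*) (A : Type*) := A → V × V

variable {V : Type*} {A : Type*} {S : Sig V}

/-- Evaluation of a literal under a paraconsistent interpretation. -/
def evalLit (I : Interp V A) : Lit A → V
  | .pos p => (I p).1
  | .neg p => (I p).2

/-- Evaluation of an extended fuzzy formula under a paraconsistent interpretation,
where `snot` is the truth function of weak negation. -/
def evalFm (snot : V → V) (I : Interp V A) : Fm V S A → V
  | .const c => c
  | .lit l => evalLit I l
  | .wneg l => snot (evalLit I l)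
  | .app f args => S.tf f (fun i => evalFm snot I (args i))

/-- Pair evaluation of an extended fuzzy formula: literals are evaluated in the lower
interpretation `L`, weakly negated literals in the upper interpretation `U`. -/
def pairEval (snot : V → V) (L U : Interp V A) : Fm V S A → V
  | .const c => c
  | .lit l => evalLit L l
  | .wneg l => snot (evalLit U l)
  | .app f args => S.tf f (fun i => pairEval snot L U (args i))

/-- An extended fuzzy logic program: a set of rules `ℓ ← B`. -/
abbrev Prog (V : Type*) (S : Sig V) (A : Type*) := Set (Lit A × Fm V S A)

/-- `I` is a model of `P`: every rule body evaluates below its head. -/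
def IsModel (snot : V → V) [Preorder V] (P : Prog V S A) (I : Interp V A) : Prop :=
  ∀ r ∈ P, evalFm snot I r.2 ≤ evalLit I r.1

variable [CompleteLattice V]

/-- The immediate consequence operator `T_P` of an extended fuzzy logic program. -/
def Tp (snot : V → V) (P : Prog V S A) (I : Interp V A) : Interp V A :=
  fun p => (sSup {v | ∃ B, (Lit.pos p, B) ∈ P ∧ v = evalFm snot I B},
            sSup {v | ∃ B, (Lit.neg p, B) ∈ P ∧ v = evalFm snot I B})

/-- Lower half of the approximator `A_P`. -/
def apx1 (snot : V → V) (P : Prog V S A) (L U : Interp V A) : Interp V A :=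
  fun p => (sSup {v | ∃ B, (Lit.pos p, B) ∈ P ∧ v = pairEval snot L U B},
            sSup {v | ∃ B, (Lit.neg p, B) ∈ P ∧ v = pairEval snot L U B})

/-- The approximator `A_P` on pairs of interpretations. -/
def apx (snot : V → V) (P : Prog V S A) (LU : Interp V A × Interp V A) :
    Interp V A × Interp V A :=
  (apx1 snot P LU.1 LU.2, apx1 snot P LU.2 LU.1)

/-- The precision order `≤p` on pairs of interpretations. -/
def precLE (x y : Interp V A × Interp V A) : Prop := x.1 ≤ y.1 ∧ y.2 ≤ x.2

/-- A formula contains no weak negation. -/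
def NoWneg : Fm V S A → Prop
  | .const _ => True
  | .lit _ => True
  | .wneg _ => False
  | .app _ args => ∀ i, NoWneg (args i)



lemma evalLit_mono {V A : Type*} [Preorder V] {I J : Interp V A} (hIJ : I ≤ J) :
    ∀ l, evalLit I l ≤ evalLit J l
  | .pos p => (hIJ p).1
  | .neg p => (hIJ p).2

lemma pairEval_mono {V A : Type*} [Preorder V] {S : Sig V}
    (snot : V → V) (hanti : Antitone snot) (hS : S.IsMonotone)
    {L U M T : Interp V A} (hLM : L ≤ M) (hTU : T ≤ U) :
    ∀ B : Fm V S A, pairEval snot L U B ≤ pairEval snot M T B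
  | .const _ => le_refl _
  | .lit l => evalLit_mono hLM l
  | .wneg l => hanti (evalLit_mono hTU l)
  | .app f args => hS f _ _ (fun i => pairEval_mono snot hanti hS hLM hTU (args i))

lemma apx1_mono {V A : Type*} [CompleteLattice V] {S : Sig V}
    (snot : V → V) (hanti : Antitone snot) (hS : S.IsMonotone)
    (P : Prog V S A) {L U M T : Interp V A} (hLM : L ≤ M) (hTU : T ≤ U) :
    apx1 snot P L U ≤ apx1 snot P M T := by
  intro p
  constructor <;>
  · refine sSup_le ?_
    rintro v ⟨B, hB, rfl⟩
    exact le_trans (pairEval_mono snot hanti hS hLM hTU B) (le_sSup ⟨B, hB, rfl⟩)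

/-- The approximator `A_P` is monotone with respect to the precision order
`≤p` on pairs of paraconsistent interpretations. -/
theorem apx_precision_monotone
    {V A : Type*} [CompleteLattice V] {S : Sig V}
    (snot : V → V) (hanti : Antitone snot) (hs0 : snot ⊥ = ⊤) (hs1 : snot ⊤ = ⊥)
    (hS : S.IsMonotone)
    (P : Prog V S A) (hfin : P.Finite)
    (L U M T : Interp V A) (h : precLE (L, U) (M, T)) :
    precLE (apx snot P (L, U)) (apx snot P (M, T)) := by
  obtain ⟨h1, h2⟩ := h
  exact ⟨apx1_mono snot hanti hS P h1 h2, apx1_mono snot hanti hS P h2 h1⟩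
end

section
/- Let Q be a Cornejo program with translation P_Q. For every rule or constraint body B occurring in Q, every non-paraconsistent interpretation K : Π_Q → V with lift I_K, and every paraconsistent interpretation J over Π_Q: the pair evaluation of B with lower interpretation J and upper interpretation I_K equals the ordinary evaluation of the body reduct under J, i.e., ⟦B⟧_{J,I_K} = ⟦B_K⟧_J. -/
variable {V : Type*} {A : Type*} {S : Sig V}

variable [CompleteLattice V]

open Classical

/-- Renaming of the atoms of a literal. -/
def Lit.map {A B : Type*} (f : A → B) : Lit A → Lit B
  | .pos p => .pos (f p)
  | .neg p => .neg (f p)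

/-- Renaming of the atoms of a formula. -/
def Fm.map {V : Type*} {S : Sig V} {A B : Type*} (f : A → B) : Fm V S A → Fm V S B
  | .const c => .const c
  | .lit l => .lit (l.map f)
  | .wneg l => .wneg (l.map f)
  | .app g args => .app g (fun i => (args i).map f)

/-- A formula is a *normal* fuzzy formula: it mentions only atoms
(no strong negation `¬`). -/
def Fm.Normal {V : Type*} {S : Sig V} {A : Type*} : Fm V S A → Prop
  | .const _ => True
  | .lit (.pos _) => True
  | .lit (.neg _) => False
  | .wneg (.pos _) => True
  | .wneg (.neg _) => False
  | .app _ args => ∀ i, Fm.Normal (args i)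

/-- The body reduct `B_K`: every weakly negated atom occurrence `∼p` is replaced by
the constant `∼̂(K(p))`. -/
def reductFm {V : Type*} {S : Sig V} {A : Type*} (snot : V → V) (K : A → V) :
    Fm V S A → Fm V S A
  | .const c => .const c
  | .lit l => .lit l
  | .wneg (.pos p) => .const (snot (K p))
  | .wneg (.neg p) => .wneg (.neg p)
  | .app f args => .app f (fun i => reductFm snot K (args i))

/-- The atom of a literal. -/
def Lit.atom {A : Type*} : Lit A → A
  | .pos p => p
  | .neg p => p

/-- The atom `a` occurs in the formula `φ`. -/
def Fm.occurs {V : Type*} {S : Sig V} {A : Type*} (a : A) : Fm V S A → Prop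
  | .const _ => False
  | .lit l => l.atom = a
  | .wneg l => l.atom = a
  | .app _ args => ∃ i, Fm.occurs a (args i)

/-- The atom `a` occurs in the program `P` (in a head or in a body). -/
def occursProg {V : Type*} {S : Sig V} {A : Type*} (a : A) (P : Prog V S A) : Prop :=
  ∃ r ∈ P, r.1.atom = a ∨ Fm.occurs a r.2

/-- The translation `P_Q` of a Cornejo program given by rules `rules` and constraints
`cons` (indexed by `ι`, with fresh atom `Sum.inr i` for the `i`-th constraint):
rules are kept; a constraint `c ← B` becomes the two rules `p_r ← B` and `¬p_r ← ¬̂c`. -/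
def transC {V : Type*} {S : Sig V} {A ι : Type*} (negf : V → V)
    (rules : Set (A × Fm V S A)) (cons : ι → V × Fm V S A) : Prog V S (A ⊕ ι) :=
  {r | ∃ p B, (p, B) ∈ rules ∧ r = (Lit.pos (Sum.inl p), Fm.map Sum.inl B)} ∪
  {r | ∃ i, r = (Lit.pos (Sum.inr i), Fm.map Sum.inl (cons i).2)} ∪
  {r | ∃ i, r = (Lit.neg (Sum.inr i), Fm.const (negf (cons i).1))}

/-- The lift `I_K` of a non-paraconsistent interpretation `K`:
`I_K(p) = (K(p), ¬̂(K(p)))` for atoms occurring in `P`, and `I_K(p) = (K(p), 0)`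
otherwise. -/
noncomputable def liftK {V : Type*} [CompleteLattice V] {S : Sig V} {A : Type*}
    (negf : V → V) (P : Prog V S A) (K : A → V) : Interp V A :=
  fun a => if occursProg a P then (K a, negf (K a)) else (K a, ⊥)

lemma pairEval_eq_eval_reduct_aux
    {V : Type*} {S : Sig V} {A ι : Type*}
    (snot : V → V) (K' : A → V) (J U : Interp V (A ⊕ ι))
    (hU : ∀ p, (U (Sum.inl p)).1 = K' p) :
    ∀ B : Fm V S A, Fm.Normal B →
      pairEval snot J U (Fm.map Sum.inl B) =
        evalFm snot J (Fm.map Sum.inl (reductFm snot K' B))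
  | .const c, _ => rfl
  | .lit l, _ => rfl
  | .wneg (.pos p), _ => by
      simp [Fm.map, reductFm, pairEval, evalFm, Lit.map, evalLit, hU p]
  | .wneg (.neg p), h => absurd h (by simp [Fm.Normal])
  | .app f args, h => by
      simp only [Fm.map, reductFm, pairEval, evalFm]
      congr 1
      funext i
      exact pairEval_eq_eval_reduct_aux snot K' J U hU (args i) (h i)

/-- For every rule or constraint body `B` of a Cornejo program `Q`
(given by `rules` and `cons`), every interpretation `K : Π_Q → V` with lift `I_K`, and
every paraconsistent interpretation `J` over `Π_Q`: the pair evaluation of `B` with lower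
interpretation `J` and upper interpretation `I_K` equals the ordinary evaluation of the
body reduct `B_K` under `J`. -/
theorem cornejo_pairEval_eq_eval_reduct
    {V : Type*} [CompleteLattice V] {S : Sig V} {A ι : Type*}
    (snot : V → V) (hanti : Antitone snot) (hs0 : snot ⊥ = ⊤) (hs1 : snot ⊤ = ⊥)
    (hS : S.IsMonotone) (negf : V → V) (hneg : Function.Involutive negf)
    (rules : Set (A × Fm V S A)) (hrfin : rules.Finite) (cons : ι → V × Fm V S A)
    (hι : Finite ι)
    (hnormal : (∀ r ∈ rules, Fm.Normal r.2) ∧ ∀ i, Fm.Normal (cons i).2)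
    (B : Fm V S A) (hB : (∃ p, (p, B) ∈ rules) ∨ ∃ i, (cons i).2 = B)
    (K : (A ⊕ ι) → V) (J : Interp V (A ⊕ ι)) :
    pairEval snot J (liftK negf (transC negf rules cons) K) (Fm.map Sum.inl B) =
      evalFm snot J (Fm.map Sum.inl (reductFm snot (fun p => K (Sum.inl p)) B)) := by
  have hBnorm : Fm.Normal B := by
    rcases hB with ⟨p, hp⟩ | ⟨i, hi⟩
    · exact hnormal.1 _ hp
    · exact hi ▸ hnormal.2 i
  exact pairEval_eq_eval_reduct_aux snot _ J _
    (fun p => by unfold liftK; split <;> rfl) B hBnorm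
end

section
/- Let Q be a Cornejo program with translation P_Q, and let K : Π_Q → V with lift I_K. Then the partial application of the approximator of P_Q at upper argument I_K equals the immediate consequence operator of the translation of the reduct: for all J, A_{P_Q}(J, I_K)₁ = T_{P_{Q_K}}(J), where Q_K is the program reduct of Q with respect to K and P_{Q_K} its translation. -/
variable {V : Type*} {A : Type*} {S : Sig V}

variable [CompleteLattice V]

open Classical

/-- Key lemma: for a normal formula, pair evaluation with an upper interpretation whose
first components are `K` equals evaluation of the mapped reduct. -/
lemma pairEval_map_eq_evalFm_reduct {V : Type*} [CompleteLattice V] {S : Sig V}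
    {A ι : Type*} (snot : V → V) (K : (A ⊕ ι) → V) (J U : Interp V (A ⊕ ι))
    (hU : ∀ x, (U x).1 = K x) :
    ∀ B : Fm V S A, Fm.Normal B →
      pairEval snot J U (Fm.map Sum.inl B) =
        evalFm snot J (Fm.map Sum.inl (reductFm snot (fun q => K (Sum.inl q)) B))
  | .const c, _ => rfl
  | .lit (.pos p), _ => rfl
  | .lit (.neg p), h => absurd h (by simp [Fm.Normal])
  | .wneg (.pos p), _ => by
      simp only [Fm.map, Lit.map, reductFm, pairEval, evalFm, evalLit, hU]
  | .wneg (.neg p), h => absurd h (by simp [Fm.Normal])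
  | .app f args, h => by
      simp only [Fm.map, reductFm, pairEval, evalFm]
      exact congrArg _ (funext fun i =>
        pairEval_map_eq_evalFm_reduct snot K J U hU (args i) (h i))

/-- For a Cornejo program `Q` (given by `rules` and `cons`) with
translation `P_Q`, and `K : Π_Q → V` with lift `I_K`: the partial application of the
approximator of `P_Q` at upper argument `I_K` equals the immediate consequence operator
of the translation `P_{Q_K}` of the program reduct `Q_K` (which replaces every rule and
constraint body by its body reduct, keeping the same fresh atoms `p_r`). -/
theorem cornejo_apx1_eq_Tp_reduct
    {V : Type*} [CompleteLattice V] {S : Sig V} {A ι : Type*}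
    (snot : V → V) (hanti : Antitone snot) (hs0 : snot ⊥ = ⊤) (hs1 : snot ⊤ = ⊥)
    (hS : S.IsMonotone) (negf : V → V) (hneg : Function.Involutive negf)
    (rules : Set (A × Fm V S A)) (hrfin : rules.Finite) (cons : ι → V × Fm V S A)
    (hι : Finite ι)
    (hnormal : (∀ r ∈ rules, Fm.Normal r.2) ∧ ∀ i, Fm.Normal (cons i).2)
    (K : (A ⊕ ι) → V) (J : Interp V (A ⊕ ι)) :
    apx1 snot (transC negf rules cons) J (liftK negf (transC negf rules cons) K) =
      Tp snot
        (transC negf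
          {r | ∃ p B, (p, B) ∈ rules ∧
                r = (p, reductFm snot (fun q => K (Sum.inl q)) B)}
          (fun i => ((cons i).1, reductFm snot (fun q => K (Sum.inl q)) (cons i).2)))
        J := by
  set U := liftK negf (transC negf rules cons) K with hUdef
  have hU : ∀ x, (U x).1 = K x := by
    intro x
    simp only [hUdef, liftK]
    split <;> rfl
  set rd : Fm V S A → Fm V S A := reductFm snot (fun q => K (Sum.inl q)) with hrd
  have key : ∀ B : Fm V S A, Fm.Normal B →
      pairEval snot J U (Fm.map Sum.inl B) = evalFm snot J (Fm.map Sum.inl (rd B)) :=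
    fun B hB => pairEval_map_eq_evalFm_reduct snot K J U hU B hB
  funext q
  simp only [apx1, Tp]
  congr 1
  · congr 1
    ext v
    simp only [Set.mem_setOf_eq, transC, Set.mem_union]
    constructor
    · rintro ⟨C, hC, rfl⟩
      rcases hC with (⟨p, B, hpB, hEq⟩ | ⟨i, hEq⟩) | ⟨i, hEq⟩
      · obtain ⟨h1, h2⟩ := Prod.mk.injEq .. ▸ hEq
        injection h1 with h1
        refine ⟨Fm.map Sum.inl (rd B), Or.inl (Or.inl ⟨p, rd B, ⟨p, B, hpB, rfl⟩, ?_⟩),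
          h2 ▸ key B (hnormal.1 _ hpB)⟩
        rw [h1]
      · obtain ⟨h1, h2⟩ := Prod.mk.injEq .. ▸ hEq
        injection h1 with h1
        refine ⟨Fm.map Sum.inl (rd (cons i).2), Or.inl (Or.inr ⟨i, ?_⟩),
          h2 ▸ key (cons i).2 (hnormal.2 i)⟩
        rw [h1]
      · exact absurd (Prod.mk.injEq .. ▸ hEq).1 (by simp)
    · rintro ⟨C, hC, rfl⟩
      rcases hC with (⟨p, B', ⟨p', B, hpB, hEq'⟩, hEq⟩ | ⟨i, hEq⟩) | ⟨i, hEq⟩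
      · obtain ⟨hp, hB'⟩ := Prod.mk.injEq .. ▸ hEq'
        obtain ⟨h1, h2⟩ := Prod.mk.injEq .. ▸ hEq
        injection h1 with h1
        subst hp
        refine ⟨Fm.map Sum.inl B, Or.inl (Or.inl ⟨p, B, hpB, ?_⟩),
          by rw [h2, hB']; exact (key B (hnormal.1 _ hpB)).symm⟩
        rw [h1]
      · obtain ⟨h1, h2⟩ := Prod.mk.injEq .. ▸ hEq
        injection h1 with h1
        refine ⟨Fm.map Sum.inl (cons i).2, Or.inl (Or.inr ⟨i, ?_⟩),
          by rw [h2]; exact (key (cons i).2 (hnormal.2 i)).symm⟩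
        rw [h1]
      · exact absurd (Prod.mk.injEq .. ▸ hEq).1 (by simp)
  · congr 1
    ext v
    simp only [Set.mem_setOf_eq, transC, Set.mem_union]
    constructor
    · rintro ⟨C, hC, rfl⟩
      rcases hC with (⟨p, B, hpB, hEq⟩ | ⟨i, hEq⟩) | ⟨i, hEq⟩
      · exact absurd (Prod.mk.injEq .. ▸ hEq).1 (by simp)
      · exact absurd (Prod.mk.injEq .. ▸ hEq).1 (by simp)
      · obtain ⟨h1, h2⟩ := Prod.mk.injEq .. ▸ hEq
        injection h1 with h1
        refine ⟨Fm.const (negf (cons i).1), Or.inr ⟨i, ?_⟩, by rw [h2]; rfl⟩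
        rw [h1]
    · rintro ⟨C, hC, rfl⟩
      rcases hC with (⟨p, B', hpB, hEq⟩ | ⟨i, hEq⟩) | ⟨i, hEq⟩
      · exact absurd (Prod.mk.injEq .. ▸ hEq).1 (by simp)
      · exact absurd (Prod.mk.injEq .. ▸ hEq).1 (by simp)
      · obtain ⟨h1, h2⟩ := Prod.mk.injEq .. ▸ hEq
        injection h1 with h1
        refine ⟨Fm.const (negf (cons i).1), Or.inr ⟨i, ?_⟩, by rw [h2]; rfl⟩
        rw [h1]
end
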